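/- arXiv:1101.3091 — 2 statements merged into one kernel-verified Lean document; each statement's English description precedes it below -/
import Mathlib

section
/- For every natural number n ≥ 1, the number of labelled connected combinatorial triangulations of size n (i.e., the number of such triangulations, not identifying isomorphic ones) is at least (2n+1)! · 6^{2n} / 2. -/
/-- A combinatorial triangulation of size `n`: `n` labelled tetrahedra (vertices labelled
by `Fin 4`, and the four faces of each tetrahedron labelled by the opposite vertex),
a fixed-point-free involution `glue` pairing up the `4n` faces, and for each face `f`
one of the six rotations or reflections identifying `f` with `glue f`.  A rotation or
reflection (a bijection between the three vertices of the two glued faces) is encoded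
as the unique permutation of all four vertex labels extending it, i.e. a permutation
sending the vertex opposite `f` to the vertex opposite `glue f`; the bijections assigned
to `f` and `glue f` must be mutually inverse. -/
structure CombinatorialTriangulation (n : ℕ) where
  glue : Equiv.Perm (Fin n × Fin 4)
  glue_involutive : ∀ f, glue (glue f) = f
  glue_fixedPointFree : ∀ f, glue f ≠ f
  rot : Fin n × Fin 4 → Equiv.Perm (Fin 4)
  rot_opp : ∀ f, rot f f.2 = (glue f).2
  rot_inverse : ∀ f, rot (glue f) = (rot f)⁻¹

/-- The face pairing graph, as a simple graph on the tetrahedra: two tetrahedra are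
adjacent when some face of one is identified with a face of the other.  (Connectivity
of the 4-valent face pairing multigraph is equivalent to connectivity of this graph.) -/
def facePairingGraph {n : ℕ} (T : CombinatorialTriangulation n) : SimpleGraph (Fin n) :=
  SimpleGraph.fromRel (fun t t' => ∃ i : Fin 4, (T.glue (t, i)).1 = t')

/-- A combinatorial triangulation is connected if its face pairing graph is connected. -/
def IsConnectedTriangulation {n : ℕ} (T : CombinatorialTriangulation n) : Prop :=
  (facePairingGraph T).Connected

/-
The gluing data of a triangulation splits into a fixed-point-free involution of the `4n` faces
and, for each of the `2n` glued pairs, one of `6` identifications, so it suffices to find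
`(2n+1)!/2` connected face pairings. A new tetrahedron can be inserted into a connected pairing
of `n` tetrahedra in `4n(4n+1)` ways that can be read off from the result: glue its face `0` to
any old face `x`, its face `2` to any face other than `x` and its own faces `0, 2`, and re-glue
the freed faces to each other. Since `(2n+3)(2n+2) ≤ 4n(4n+1)` for `n ≥ 1`, induction from the
`3` pairings of a single tetrahedron gives the bound.
-/
open Equiv Nat

section FixedPointFreeInvolution

variable {α β : Type*}

def IsFixedPointFreeInvolution (g : Perm α) : Prop :=
  (∀ a, g (g a) = a) ∧ ∀ a, g a ≠ a

instance [Fintype α] [DecidableEq α] : DecidablePred (IsFixedPointFreeInvolution (α := α)) :=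
  fun _ => inferInstanceAs (Decidable (_ ∧ _))

theorem IsFixedPointFreeInvolution.permCongr {g : Perm α} (hg : IsFixedPointFreeInvolution g)
    (e : α ≃ β) : IsFixedPointFreeInvolution (e.permCongr g) :=
  ⟨fun b => by simp [hg.1],
    fun b h => hg.2 (e.symm b) (e.eq_symm_apply.mpr (by simpa using h))⟩

theorem isFixedPointFreeInvolution_permCongr_iff {g : Perm α} (e : α ≃ β) :
    IsFixedPointFreeInvolution (e.permCongr g) ↔ IsFixedPointFreeInvolution g :=
  ⟨fun h => by simpa only [← permCongr_symm, symm_apply_apply] using h.permCongr e.symm,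
    (·.permCongr e)⟩

theorem lt_apply_of_not_lt [LinearOrder β] {key : α → β} (hkey : Function.Injective key)
    {g : Perm α} (hg : IsFixedPointFreeInvolution g) {a : α} (h : ¬ key a < key (g a)) :
    key (g a) < key (g (g a)) := by
  rw [hg.1 a]
  exact lt_of_le_of_ne (not_lt.mp h) (hkey.ne (hg.2 a))

theorem card_lt_apply_mul_two [Fintype α] [LinearOrder β] {key : α → β}
    (hkey : Function.Injective key) {g : Perm α} (hg : IsFixedPointFreeInvolution g) :
    Nat.card {a // key a < key (g a)} * 2 = Nat.card α := by
  classical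
  have hcompl : Nat.card {a // key a < key (g a)} = Nat.card {a // ¬ key a < key (g a)} :=
    Nat.card_congr <| g.subtypeEquiv fun a =>
      ⟨fun h => by rw [hg.1]; exact lt_asymm h, fun h => by
        simpa [hg.1] using lt_apply_of_not_lt hkey hg h⟩
  have hsum := Fintype.card_subtype_compl (fun a => key a < key (g a))
  have hle := Fintype.card_subtype_le (fun a => key a < key (g a))
  simp only [Nat.card_eq_fintype_card] at hcompl ⊢
  omega

end FixedPointFreeInvolution

section FacePairing

variable {V W : Type*}

def pairingGraph (g : Perm (V × Fin 4)) : SimpleGraph V :=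
  SimpleGraph.fromRel fun t t' => ∃ i : Fin 4, (g (t, i)).1 = t'

abbrev ConnectedFacePairing (V : Type*) : Type _ :=
  {g : Perm (V × Fin 4) // IsFixedPointFreeInvolution g ∧ (pairingGraph g).Connected}

def pairingGraphIso (e : V ≃ W) (g : Perm (V × Fin 4)) :
    pairingGraph g ≃g pairingGraph ((e.prodCongr (Equiv.refl _)).permCongr g) where
  toEquiv := e
  map_rel_iff' {t t'} := by
    simp [pairingGraph, SimpleGraph.fromRel_adj, e.apply_eq_iff_eq]

def ConnectedFacePairing.congr (e : V ≃ W) : ConnectedFacePairing V ≃ ConnectedFacePairing W :=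
  (e.prodCongr (Equiv.refl _)).permCongr.subtypeEquiv fun g => by
    rw [isFixedPointFreeInvolution_permCongr_iff, (pairingGraphIso e g).connected_iff]

theorem pairingGraph_reachable_apply (g : Perm (V × Fin 4)) (f : V × Fin 4) :
    (pairingGraph g).Reachable f.1 (g f).1 := by
  by_cases h : f.1 = (g f).1
  · rw [h]
  · exact (SimpleGraph.fromRel_adj _ _ _ |>.mpr ⟨h, .inl ⟨f.2, rfl⟩⟩).reachable

theorem reachable_swap [DecidableEq V] {G : SimpleGraph V} {p q : V × Fin 4}
    (h : G.Reachable p.1 q.1) (f : V × Fin 4) : G.Reachable f.1 (swap p q f).1 := by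
  rcases eq_or_ne f p with rfl | hp
  · simpa using h
  rcases eq_or_ne f q with rfl | hq
  · simpa using h.symm
  rw [swap_apply_of_ne_of_ne hp hq]

theorem reachable_of_reachable_permCongr {G : SimpleGraph V} {σ g : Perm (V × Fin 4)}
    (hσ : ∀ f, G.Reachable f.1 (σ f).1) (h : ∀ f, G.Reachable f.1 (σ.permCongr g f).1)
    (f : V × Fin 4) : G.Reachable f.1 (g f).1 := by
  have hσf := h (σ f)
  rw [permCongr_apply, symm_apply_apply] at hσf
  exact (hσ f).trans (hσf.trans (hσ (g f)).symm)

theorem reachable_map_of_pairingGraph_reachable {G : SimpleGraph W} (emb : V → W)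
    {g : Perm (V × Fin 4)} (h : ∀ f, G.Reachable (emb f.1) (emb (g f).1)) {u v : V}
    (huv : (pairingGraph g).Reachable u v) : G.Reachable (emb u) (emb v) := by
  obtain ⟨p⟩ := huv
  induction p with
  | nil => rfl
  | cons hadj _ ih =>
    refine .trans ?_ ih
    rcases ((SimpleGraph.fromRel_adj _ _ _).mp hadj).2 with ⟨i, rfl⟩ | ⟨i, rfl⟩
    exacts [h (_, i), (h (_, i)).symm]

end FacePairing

section Insertion

variable {V : Type*}

def addTetrahedron (g : Perm (V × Fin 4)) (π : Perm (Fin 4)) : Perm (Option V × Fin 4) where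
  toFun f := f.1.elim (none, π f.2) fun t => Prod.map some id (g (t, f.2))
  invFun f := f.1.elim (none, π⁻¹ f.2) fun t => Prod.map some id (g⁻¹ (t, f.2))
  left_inv := by rintro ⟨_ | t, i⟩ <;> simp
  right_inv := by rintro ⟨_ | t, i⟩ <;> simp

@[simp]
theorem addTetrahedron_none (g : Perm (V × Fin 4)) (π : Perm (Fin 4)) (i : Fin 4) :
    addTetrahedron g π (none, i) = (none, π i) := rfl

@[simp]
theorem addTetrahedron_some (g : Perm (V × Fin 4)) (π : Perm (Fin 4)) (t : V) (i : Fin 4) :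
    addTetrahedron g π (some t, i) = ((some (g (t, i)).1, (g (t, i)).2)) := rfl

theorem addTetrahedron_injective (π : Perm (Fin 4)) :
    Function.Injective fun g : Perm (V × Fin 4) => addTetrahedron g π := by
  intro g g' h
  ext1 f
  simpa [Prod.ext_iff] using congr($h (some f.1, f.2))

theorem IsFixedPointFreeInvolution.addTetrahedron {g : Perm (V × Fin 4)}
    (hg : IsFixedPointFreeInvolution g) {π : Perm (Fin 4)} (hπ : IsFixedPointFreeInvolution π) :
    IsFixedPointFreeInvolution (addTetrahedron g π) := by
  refine ⟨?_, ?_⟩ <;> rintro ⟨_ | t, i⟩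
  · simp [hπ.1]
  · simp [hg.1]
  · simpa using hπ.2 i
  · simpa [Prod.ext_iff] using hg.2 (t, i)

variable [DecidableEq V]

/-- Starting from `g` plus a new tetrahedron `none` glued `0–1, 2–3`, two switches glue face `0`
to `x` and face `2` to `w`, the freed faces being glued to each other. As `x` and `w` can be read
off at faces `0` and `2`, the result determines `(g, x, w)`. -/
def insertTetrahedron (g : Perm (V × Fin 4)) (x : V × Fin 4) (w : Option V × Fin 4) :
    Perm (Option V × Fin 4) :=
  (swap (none, 3) w * swap (some x.1, x.2) (none, 1)).permCongr
    (addTetrahedron g (swap 0 1 * swap 2 3))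

variable {g : Perm (V × Fin 4)} {x : V × Fin 4} {w : Option V × Fin 4}

theorem insertTetrahedron_none_zero (hwx : w ≠ (some x.1, x.2)) (hw0 : w ≠ (none, 0)) :
    insertTetrahedron g x w (none, 0) = (some x.1, x.2) := by
  simp [insertTetrahedron, swap_apply_of_ne_of_ne, hwx.symm, hw0.symm]

theorem insertTetrahedron_none_two (hw2 : w ≠ (none, 2)) :
    insertTetrahedron g x w (none, 2) = w := by
  simp [insertTetrahedron, swap_apply_of_ne_of_ne, hw2.symm]

theorem IsFixedPointFreeInvolution.insertTetrahedron (hg : IsFixedPointFreeInvolution g) :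
    IsFixedPointFreeInvolution (insertTetrahedron g x w) :=
  (hg.addTetrahedron (by decide)).permCongr _

theorem connected_insertTetrahedron (hg : (pairingGraph g).Connected)
    (hwx : w ≠ (some x.1, x.2)) (hw0 : w ≠ (none, 0)) (hw2 : w ≠ (none, 2)) :
    (pairingGraph (insertTetrahedron g x w)).Connected := by
  set G := pairingGraph (insertTetrahedron g x w)
  have hx : G.Reachable none (some x.1) := by
    simpa only [insertTetrahedron_none_zero hwx hw0] using
      pairingGraph_reachable_apply (insertTetrahedron g x w) (none, 0)
  have hw : G.Reachable none w.1 := by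
    simpa only [insertTetrahedron_none_two hw2] using
      pairingGraph_reachable_apply (insertTetrahedron g x w) (none, 2)
  have hlift : ∀ f, G.Reachable f.1 (addTetrahedron g (swap 0 1 * swap 2 3) f).1 :=
    reachable_of_reachable_permCongr
      (fun f => (reachable_swap hx.symm f).trans (reachable_swap hw _))
      (pairingGraph_reachable_apply _)
  have hold : ∀ t t', G.Reachable (some t) (some t') := fun t t' =>
    reachable_map_of_pairingGraph_reachable some (fun f => hlift (some f.1, f.2))
      (hg.preconnected t t')
  refine ⟨fun u v => ?_⟩
  have hu : ∀ u, G.Reachable (some x.1) u := by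
    rintro (_ | t)
    exacts [hx.symm, hold _ _]
  exact (hu u).symm.trans (hu v)

theorem insertTetrahedron_injective {g g' : Perm (V × Fin 4)} {x x' : V × Fin 4}
    {w w' : Option V × Fin 4} (hwx : w ≠ (some x.1, x.2)) (hw0 : w ≠ (none, 0))
    (hw2 : w ≠ (none, 2)) (hwx' : w' ≠ (some x'.1, x'.2)) (hw0' : w' ≠ (none, 0))
    (hw2' : w' ≠ (none, 2)) (h : insertTetrahedron g x w = insertTetrahedron g' x' w') :
    g = g' ∧ x = x' ∧ w = w' := by
  have hxx' : x = x' := by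
    have h0 := congr($h (none, 0))
    rw [insertTetrahedron_none_zero hwx hw0, insertTetrahedron_none_zero hwx' hw0'] at h0
    simpa [Prod.ext_iff] using h0
  have hww' : w = w' := by
    simpa only [insertTetrahedron_none_two hw2, insertTetrahedron_none_two hw2'] using
      congr($h (none, 2))
  subst hxx' hww'
  exact ⟨addTetrahedron_injective _ ((permCongr _).injective h), rfl, rfl⟩

end Insertion

theorem card_connectedFacePairing_mul_le_card_option {V : Type*} [Fintype V] [DecidableEq V] :
    Nat.card (ConnectedFacePairing V) * (4 * Fintype.card V * (4 * Fintype.card V + 1)) ≤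
      Nat.card (ConnectedFacePairing (Option V)) := by
  let Target (x : V × Fin 4) : Type _ :=
    {w : Option V × Fin 4 // w ∉ ({(some x.1, x.2), (none, 0), (none, 2)} : Finset _)}
  have hTarget (x : V × Fin 4) : Nat.card (Target x) = 4 * Fintype.card V + 1 := by
    rw [Nat.card_eq_fintype_card, Fintype.card_subtype_compl, Fintype.card_coe,
      Finset.card_insert_of_notMem (by simp), Finset.card_pair (by simp)]
    simp only [Fintype.card_prod, Fintype.card_option, Fintype.card_fin]
    omega
  let insertion (p : ConnectedFacePairing V × Σ x, Target x) : ConnectedFacePairing (Option V) :=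
    have hw : _ ∧ _ ∧ _ := by simpa [not_or] using p.2.2.2
    ⟨insertTetrahedron p.1.1 p.2.1 p.2.2, p.1.2.1.insertTetrahedron,
      connected_insertTetrahedron p.1.2.2 hw.1 hw.2.1 hw.2.2⟩
  have hinj : Function.Injective insertion := by
    rintro ⟨g, x, w, hw⟩ ⟨g', x', w', hw'⟩ h
    simp only [Finset.mem_insert, Finset.mem_singleton, not_or] at hw hw'
    obtain ⟨hg, rfl, rfl⟩ :=
      insertTetrahedron_injective hw.1 hw.2.1 hw.2.2 hw'.1 hw'.2.1 hw'.2.2 congr(($h).1)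
    obtain rfl := Subtype.ext hg
    rfl
  calc Nat.card (ConnectedFacePairing V) * (4 * Fintype.card V * (4 * Fintype.card V + 1))
      = Nat.card (ConnectedFacePairing V × Σ x, Target x) := by
        rw [Nat.card_prod, Nat.card_sigma, Finset.sum_congr rfl fun x _ => hTarget x]
        simp only [Finset.sum_const, Finset.card_univ, smul_eq_mul, Fintype.card_prod,
          Fintype.card_fin]
        ring
    _ ≤ _ := Nat.card_le_card_of_injective insertion hinj

theorem card_fixedPointFreeInvolution_le_card_connectedFacePairing (V : Type*) [Unique V] :
    Nat.card {π : Perm (Fin 4) // IsFixedPointFreeInvolution π} ≤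
      Nat.card (ConnectedFacePairing V) :=
  Nat.card_le_card_of_injective
    (fun π => ⟨(Equiv.refl V).prodCongr π.1,
      ⟨fun f => Prod.ext rfl (π.2.1 f.2), fun f h => π.2.2 f.2 congr(($h).2)⟩,
      .of_subsingleton⟩)
    (fun π π' h => Subtype.ext <| Equiv.ext fun i => by
      simpa using congr(($h).1 (default, i)))

theorem three_le_card_connectedFacePairing_fin_one :
    3 ≤ Nat.card (ConnectedFacePairing (Fin 1)) :=
  calc 3 = Nat.card {π : Perm (Fin 4) // IsFixedPointFreeInvolution π} := by
        rw [Nat.card_eq_fintype_card]; decide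
    _ ≤ _ := card_fixedPointFreeInvolution_le_card_connectedFacePairing _

theorem factorial_le_two_mul_card_connectedFacePairing {n : ℕ} (hn : 1 ≤ n) :
    (2 * n + 1)! ≤ 2 * Nat.card (ConnectedFacePairing (Fin n)) := by
  induction n, hn using Nat.le_induction with
  | base =>
    have := three_le_card_connectedFacePairing_fin_one
    simp only [Nat.factorial]
    omega
  | succ n hn ih =>
    have hstep := card_connectedFacePairing_mul_le_card_option (V := Fin n)
    rw [Fintype.card_fin, ← Nat.card_congr (ConnectedFacePairing.congr (finSuccEquiv n))] at hstep
    have hgrowth : (2 * n + 3) * (2 * n + 2) ≤ 4 * n * (4 * n + 1) := by nlinarith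
    calc (2 * (n + 1) + 1)! = (2 * n + 3) * (2 * n + 2) * (2 * n + 1)! := by
          rw [show 2 * (n + 1) + 1 = 2 * n + 1 + 1 + 1 by ring, Nat.factorial_succ,
            Nat.factorial_succ]; ring
      _ ≤ 4 * n * (4 * n + 1) * (2 * Nat.card (ConnectedFacePairing (Fin n))) :=
          Nat.mul_le_mul hgrowth ih
      _ ≤ 2 * Nat.card (ConnectedFacePairing (Fin (n + 1))) := by nlinarith

section Rotations

variable {n : ℕ}

instance : Finite (CombinatorialTriangulation n) :=
  Finite.of_injective (fun T => (T.glue, T.rot)) fun T T' h => by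
    cases T; cases T'; cases congr(($h).1); cases congr(($h).2); rfl

/-- Each glued pair is oriented by the rotation at its lexicographically smaller face; the other
face gets the inverse. -/
def toTriangulation (g : Perm (Fin n × Fin 4)) (hg : IsFixedPointFreeInvolution g)
    (r : ∀ f : {f // toLex f < toLex (g f)}, {ρ : Perm (Fin 4) // ρ f.1.2 = (g f.1).2}) :
    CombinatorialTriangulation n where
  glue := g
  glue_involutive := hg.1
  glue_fixedPointFree := hg.2
  rot f := if h : toLex f < toLex (g f) then r ⟨f, h⟩ else
    (r ⟨g f, lt_apply_of_not_lt toLex.injective hg h⟩).1⁻¹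
  rot_opp f := by
    split_ifs with h
    · exact (r _).2
    · rw [Perm.inv_eq_iff_eq, (r _).2, hg.1]
  rot_inverse f := by
    by_cases h : toLex f < toLex (g f)
    · have h' : ¬ toLex (g f) < toLex (g (g f)) := by rw [hg.1]; exact lt_asymm h
      have hr : ∀ {a b : {f // toLex f < toLex (g f)}}, a = b → (r a).1 = (r b).1 := by
        rintro a _ rfl; rfl
      simp only [dif_pos h, dif_neg h']
      exact congrArg (·⁻¹) (hr (Subtype.ext (hg.1 f)))
    · simp [dif_neg h, lt_apply_of_not_lt toLex.injective hg h]

theorem card_perm_fin_four_apply_eq (a b : Fin 4) :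
    Nat.card {ρ : Perm (Fin 4) // ρ a = b} = 6 := by
  rw [Nat.card_eq_fintype_card]
  revert a b
  decide

theorem card_connectedFacePairing_mul_le_card_connectedTriangulation :
    Nat.card (ConnectedFacePairing (Fin n)) * 6 ^ (2 * n) ≤
      Nat.card {T : CombinatorialTriangulation n // IsConnectedTriangulation T} := by
  let Data := Σ g : ConnectedFacePairing (Fin n),
    ∀ f : {f // toLex f < toLex (g.1 f)}, {ρ : Perm (Fin 4) // ρ f.1.2 = (g.1 f.1).2}
  have hcard : Nat.card Data = Nat.card (ConnectedFacePairing (Fin n)) * 6 ^ (2 * n) := by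
    have : Fintype (ConnectedFacePairing (Fin n)) := Fintype.ofFinite _
    rw [Nat.card_sigma, Nat.card_eq_fintype_card (α := ConnectedFacePairing (Fin n)),
      ← smul_eq_mul, ← Finset.card_univ, ← Finset.sum_const]
    refine Finset.sum_congr rfl fun g _ => ?_
    have hreps := card_lt_apply_mul_two toLex.injective g.2.1
    rw [Nat.card_eq_fintype_card (α := Fin n × Fin 4), Fintype.card_prod, Fintype.card_fin,
      Fintype.card_fin] at hreps
    rw [Nat.card_pi, Finset.prod_congr rfl fun f _ => card_perm_fin_four_apply_eq _ _,
      Finset.prod_const, Finset.card_univ, ← Nat.card_eq_fintype_card]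
    congr 1
    omega
  let build (d : Data) : {T : CombinatorialTriangulation n // IsConnectedTriangulation T} :=
    ⟨toTriangulation d.1.1 d.1.2.1 d.2, d.1.2.2⟩
  have hinj : Function.Injective build := by
    rintro ⟨g, r⟩ ⟨g', r'⟩ h
    obtain rfl : g = g' := Subtype.ext congr(($h).1.glue)
    have hrot : (toTriangulation g.1 g.2.1 r).rot = (toTriangulation g.1 g.2.1 r').rot :=
      congr(($h).1.rot)
    congr 1
    funext f
    exact Subtype.ext (by simpa [toTriangulation, f.2] using congr_fun hrot f.1)
  exact hcard ▸ Nat.card_le_card_of_injective build hinj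

end Rotations

/-- For every `n ≥ 1`, the number of labelled connected combinatorial triangulations
of size `n` is at least `(2n+1)! · 6^(2n) / 2`. -/
theorem count_labelled_connected_triangulations_lower_bound (n : ℕ) (hn : 1 ≤ n) :
    ((Nat.factorial (2 * n + 1) : ℚ) * 6 ^ (2 * n)) / 2 ≤
      (Nat.card {T : CombinatorialTriangulation n // IsConnectedTriangulation T} : ℚ) := by
  have hpairings := factorial_le_two_mul_card_connectedFacePairing hn
  have hrotations := card_connectedFacePairing_mul_le_card_connectedTriangulation (n := n)
  rw [div_le_iff₀ two_pos]
  exact_mod_cast (calc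
    (2 * n + 1)! * 6 ^ (2 * n) ≤ 2 * Nat.card (ConnectedFacePairing (Fin n)) * 6 ^ (2 * n) :=
      Nat.mul_le_mul_right _ hpairings
    _ ≤ _ := by rw [mul_assoc, mul_comm]; exact Nat.mul_le_mul_right 2 hrotations)
end

section
/- For every natural number n ≥ 1, the number of isomorphism classes of connected combinatorial triangulations of size n is at least (2n+1)! · 6^{2n} / (2 · n! · 24^n). -/
/-- Two combinatorial triangulations are isomorphic when some relabelling `π` of the
tetrahedra together with relabellings `ρ t` of the four vertices of each tetrahedron `t`
(an element of `Sₙ ⋉ (S₄)ⁿ`) carries the gluing data of one to the other. -/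
def TriangulationIso {n : ℕ} (T T' : CombinatorialTriangulation n) : Prop :=
  ∃ (π : Equiv.Perm (Fin n)) (ρ : Fin n → Equiv.Perm (Fin 4)),
    (∀ f : Fin n × Fin 4,
      T'.glue (π f.1, ρ f.1 f.2) = (π (T.glue f).1, ρ (T.glue f).1 (T.glue f).2)) ∧
    (∀ f : Fin n × Fin 4,
      T'.rot (π f.1, ρ f.1 f.2) = ρ (T.glue f).1 * T.rot f * (ρ f.1)⁻¹)

/-!
Call a triangulation descending if, for every tetrahedron `t ≠ 0`, the face of `t` opposite its
vertex `0` is glued to a tetrahedron with a smaller label. Following these faces leads every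
tetrahedron down to tetrahedron `0`, so descending triangulations are connected.

Their face pairings are counted greedily: for `t = 1, …, n - 1` in turn, that face of `t` may be
matched with any of the `2t + 2` still unmatched faces of tetrahedra below `t`, after which the
remaining `2n + 2` faces can be matched arbitrarily, in `(2n + 1)‼` ways. This gives at least
`(2n)‼ (2n + 1)‼ / 2 = (2n + 1)! / 2` pairings, each carrying `6 ^ (2n)` choices of identifying
maps. Finally an isomorphism class has at most `n! 24ⁿ` members, because a triangulation is
determined by its class representative together with an isomorphism to it.
-/

open Equiv Finset Function
open scoped Nat

section Matching

variable {α : Type*} (G : SimpleGraph α)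

/-- Perfect matchings of `G` on `s`, encoded as involutions of `α` fixing every vertex
outside `s`. -/
def IsMatchingInvolutionOn (s : Finset α) (σ : Perm α) : Prop :=
  (∀ v ∈ s, σ v ∈ s ∧ G.Adj v (σ v)) ∧ (∀ v ∉ s, σ v = v) ∧ Involutive σ

noncomputable def matchingCount (s : Finset α) : ℕ :=
  Nat.card {σ : Perm α // IsMatchingInvolutionOn G s σ}

variable {G} [DecidableEq α]

lemma IsMatchingInvolutionOn.mul_swap {s : Finset α} {v x : α} {τ : Perm α}
    (hv : v ∈ s) (hx : x ∈ s) (hvx : G.Adj v x)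
    (hτ : IsMatchingInvolutionOn G ((s.erase v).erase x) τ) :
    IsMatchingInvolutionOn G s (τ * swap v x) := by
  obtain ⟨hτs, hτout, hτinv⟩ := hτ
  have hτv : τ v = v := hτout v (by simp)
  have hτx : τ x = x := hτout x (by simp)
  have hσv : (τ * swap v x) v = x := by simp [hτx]
  have hσx : (τ * swap v x) x = v := by simp [hτv]
  have hσ : ∀ w, w ≠ v → w ≠ x → (τ * swap v x) w = τ w := fun w h1 h2 => by
    simp [swap_apply_of_ne_of_ne h1 h2]
  refine ⟨fun w hw => ?_, fun w hw => ?_, fun w => ?_⟩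
  · by_cases h1 : w = v
    · subst h1; rw [hσv]; exact ⟨hx, hvx⟩
    by_cases h2 : w = x
    · subst h2; rw [hσx]; exact ⟨hv, hvx.symm⟩
    obtain ⟨hτw, hadj⟩ := hτs w (by simp [h1, h2, hw])
    rw [hσ w h1 h2]
    exact ⟨mem_of_mem_erase (mem_of_mem_erase hτw), hadj⟩
  · have h1 : w ≠ v := by rintro rfl; exact hw hv
    have h2 : w ≠ x := by rintro rfl; exact hw hx
    rw [hσ w h1 h2, hτout w fun h => hw (mem_of_mem_erase (mem_of_mem_erase h))]
  · by_cases h1 : w = v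
    · subst h1; rw [hσv, hσx]
    by_cases h2 : w = x
    · subst h2; rw [hσx, hσv]
    have h1' : τ w ≠ v := fun h => h1 (by rw [← hτinv w, h, hτv])
    have h2' : τ w ≠ x := fun h => h2 (by rw [← hτinv w, h, hτx])
    rw [hσ w h1 h2, hσ _ h1' h2', hτinv w]

-- Matching `v` with `x` and then `G - v - x` perfectly is injective in the pair.
lemma card_mul_le_matchingCount [Finite α] {s : Finset α} {v : α} (hv : v ∈ s)
    {X : Finset α} (hX : ∀ x ∈ X, x ∈ s ∧ G.Adj v x) {m : ℕ}
    (hm : ∀ x ∈ X, m ≤ matchingCount G ((s.erase v).erase x)) :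
    #X * m ≤ matchingCount G s := by
  let extend (d : Σ x : X, {τ // IsMatchingInvolutionOn G ((s.erase v).erase x) τ}) :
      {σ // IsMatchingInvolutionOn G s σ} :=
    ⟨d.2.1 * swap v d.1, d.2.2.mul_swap hv (hX _ d.1.2).1 (hX _ d.1.2).2⟩
  have hextend : Injective extend := by
    rintro ⟨x, τ⟩ ⟨y, τ'⟩ h
    have hσ : τ.1 * swap v x = τ'.1 * swap v y := congrArg Subtype.val h
    have hxy : x = y := by
      have := congrArg (· v) hσ
      simpa [τ.2.2.1 x (notMem_erase _ _), τ'.2.2.1 y (notMem_erase _ _)] using this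
    subst hxy
    obtain rfl : τ = τ' := Subtype.ext (mul_right_cancel hσ)
    rfl
  calc #X * m = ∑ _x ∈ X, m := by rw [sum_const, smul_eq_mul]
    _ ≤ ∑ x ∈ X, matchingCount G ((s.erase v).erase x) := sum_le_sum hm
    _ = Nat.card (Σ x : X, {τ // IsMatchingInvolutionOn G ((s.erase v).erase x) τ}) := by
      rw [Nat.card_sigma, ← sum_coe_sort X]
      rfl
    _ ≤ matchingCount G s := Nat.card_le_card_of_injective extend hextend

lemma doubleFactorial_le_matchingCount [Finite α] {s : Finset α}
    (hs : (s : Set α).Pairwise G.Adj) {k : ℕ} (hk : #s = 2 * k) :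
    (2 * k - 1)‼ ≤ matchingCount G s := by
  induction k generalizing s with
  | zero =>
    obtain rfl : s = ∅ := card_eq_zero.1 hk
    have : Nonempty {σ // IsMatchingInvolutionOn G ∅ σ} :=
      ⟨⟨1, by simp, fun _ _ => rfl, fun _ => rfl⟩⟩
    exact Nat.card_pos
  | succ k ih =>
    obtain ⟨v, hv⟩ := card_pos.1 (by omega : 0 < #s)
    have hXcard : #(s.erase v) = 2 * k + 1 := by rw [card_erase_of_mem hv]; omega
    calc (2 * (k + 1) - 1)‼ = #(s.erase v) * (2 * k - 1)‼ := by
          rw [hXcard, show 2 * (k + 1) - 1 = 2 * k + 1 by omega, Nat.doubleFactorial_add_one]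
      _ ≤ matchingCount G s := by
        refine card_mul_le_matchingCount hv (fun x hx => ?_) fun x hx => ih ?_ ?_
        · exact ⟨mem_of_mem_erase hx, hs hv (mem_of_mem_erase hx) (ne_of_mem_erase hx).symm⟩
        · exact hs.mono fun y hy => mem_of_mem_erase (mem_of_mem_erase hy)
        · rw [card_erase_of_mem hx, hXcard]; rfl

end Matching

lemma card_perm_apply_eq {α : Type*} [Fintype α] [DecidableEq α] (a b : α) :
    Fintype.card {p : Perm α // p a = b} = (Fintype.card α - 1)! :=
  calc Fintype.card {p : Perm α // p a = b}
      = Fintype.card {p : Perm α // ∀ x, ¬x ≠ a → p x = x} :=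
        Fintype.card_congr <| (Equiv.mulLeft (swap a b)).subtypeEquiv fun p => by
          simp [swap_apply_eq_iff]
    _ = Fintype.card (Perm {x // x ≠ a}) :=
        Fintype.card_congr (Perm.subtypeEquivSubtypePerm _).symm
    _ = (Fintype.card α - 1)! := by
        rw [Fintype.card_perm, Fintype.card_subtype_compl, Fintype.card_subtype_eq]

lemma card_le_card_quot_mul {X : Type*} [Finite X] {r : X → X → Prop} (hr : Equivalence r)
    {m : ℕ} (hm : ∀ y, Nat.card {x // r x y} ≤ m) : Nat.card X ≤ Nat.card (Quot r) * m := by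
  have := Fintype.ofFinite (Quot r)
  have hfiber (q : Quot r) : Nat.card {x // Quot.mk r x = q} ≤ m := by
    obtain ⟨y, rfl⟩ := Quot.exists_rep q
    rw [Nat.card_congr (subtypeEquivRight fun x => by rw [Quot.eq, hr.eqvGen_iff])]
    exact hm y
  calc Nat.card X = Nat.card (Σ q : Quot r, {x // Quot.mk r x = q}) :=
        Nat.card_congr (sigmaFiberEquiv _).symm
    _ = ∑ q, Nat.card {x // Quot.mk r x = q} := Nat.card_sigma
    _ ≤ ∑ _q : Quot r, m := sum_le_sum fun q _ => hfiber q
    _ = Nat.card (Quot r) * m := by simp [Nat.card_eq_fintype_card]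

namespace CombinatorialTriangulation

variable {n : ℕ}

@[ext]
lemma ext {T T' : CombinatorialTriangulation n} (hglue : T.glue = T'.glue)
    (hrot : T.rot = T'.rot) : T = T' := by
  cases T; cases T'; cases hglue; cases hrot; rfl

instance : Finite (CombinatorialTriangulation n) :=
  Finite.of_injective (fun T => (T.glue, T.rot)) fun _ _ h =>
    ext (congrArg Prod.fst h) (congrArg Prod.snd h)

/-- The face of a tetrahedron `t ≠ 0` opposite its vertex `0`; in a descending triangulation it
is glued to a face of an earlier tetrahedron, the parent of `t`. -/
def IsParentFace (f : Fin n × Fin 4) : Prop := f.2 = 0 ∧ 0 < (f.1 : ℕ)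

def IsDescending (T : CombinatorialTriangulation n) : Prop :=
  ∀ f, IsParentFace f → (T.glue f).1 < f.1

lemma IsDescending.isConnected (hn : 0 < n) {T : CombinatorialTriangulation n}
    (hT : IsDescending T) : IsConnectedTriangulation T := by
  have hroot (t : Fin n) : (facePairingGraph T).Reachable t ⟨0, hn⟩ := by
    induction t using WellFoundedLT.induction with
    | _ t ih =>
      rcases Nat.eq_zero_or_pos t with h0 | hpos
      · rw [show t = ⟨0, hn⟩ from Fin.ext h0]
      · have hlt := hT (t, 0) ⟨rfl, hpos⟩
        have hadj : (facePairingGraph T).Adj t (T.glue (t, 0)).1 := by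
          rw [facePairingGraph, SimpleGraph.fromRel_adj]
          exact ⟨hlt.ne', Or.inl ⟨0, rfl⟩⟩
        exact hadj.reachable.trans (ih _ hlt)
  rw [IsConnectedTriangulation, SimpleGraph.connected_iff]
  exact ⟨fun s t => (hroot s).trans (hroot t).symm, ⟨⟨0, hn⟩⟩⟩

lemma card_isDescending_le_card_isConnected (hn : 0 < n) :
    Nat.card {T : CombinatorialTriangulation n // IsDescending T} ≤
      Nat.card {T : CombinatorialTriangulation n // IsConnectedTriangulation T} :=
  Nat.card_le_card_of_injective _
    (Subtype.impEmbedding _ _ fun _ hT => IsDescending.isConnected hn hT).injective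

def descendingGraph (n : ℕ) : SimpleGraph (Fin n × Fin 4) where
  Adj f g := f ≠ g ∧ (IsParentFace f → g.1 < f.1) ∧ (IsParentFace g → f.1 < g.1)
  symm := ⟨fun _ _ h => ⟨h.1.symm, h.2.2, h.2.1⟩⟩
  loopless := ⟨fun _ h => h.1 rfl⟩

-- The faces still unmatched after the parent faces of `1, …, t - 1` have been matched.
def IsLevel (t : ℕ) (s : Finset (Fin n × Fin 4)) : Prop :=
  (∀ f : Fin n × Fin 4, t ≤ (f.1 : ℕ) → f ∈ s) ∧
    (∀ f ∈ s, IsParentFace f → t ≤ (f.1 : ℕ)) ∧ #s + 2 * t = 4 * n + 2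

lemma card_filter_le_fst {t : ℕ} (ht : t < n) :
    #(univ.filter fun f : Fin n × Fin 4 => t ≤ (f.1 : ℕ)) = 4 * (n - t) := by
  rw [show (univ.filter fun f : Fin n × Fin 4 => t ≤ (f.1 : ℕ)) = Ici ⟨t, ht⟩ ×ˢ univ by
    ext; simp [Fin.le_def], card_product, Fin.card_Ici, card_univ, Fintype.card_fin, mul_comm]

lemma IsLevel.succ {t : ℕ} (ht : t < n) {s : Finset (Fin n × Fin 4)} (hs : IsLevel t s)
    {x : Fin n × Fin 4} (hx : x ∈ s) (hxt : (x.1 : ℕ) < t) :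
    IsLevel (t + 1) ((s.erase (⟨t, ht⟩, 0)).erase x) := by
  obtain ⟨hup, hparent, hcard⟩ := hs
  refine ⟨fun f hf => ?_, fun f hf hpf => ?_, ?_⟩
  · refine mem_erase.2 ⟨?_, mem_erase.2 ⟨?_, hup f (by omega)⟩⟩
    · rintro rfl; omega
    · rintro rfl; simp at hf
  · have hne : f ≠ (⟨t, ht⟩, 0) := ne_of_mem_erase (mem_of_mem_erase hf)
    exact (hparent f (mem_of_mem_erase (mem_of_mem_erase hf)) hpf).lt_of_ne
      fun h => hne (Prod.ext (Fin.ext h.symm) hpf.1)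
  · have hxv : x ≠ (⟨t, ht⟩, 0) := by rintro rfl; simp at hxt
    have h1 := card_erase_add_one (mem_erase.2 ⟨hxv, hx⟩)
    have h2 := card_erase_add_one (hup (⟨t, ht⟩, 0) le_rfl)
    omega

lemma prod_mul_doubleFactorial_le_matchingCount {t : ℕ} (htn : t ≤ n)
    {s : Finset (Fin n × Fin 4)} (hs : IsLevel t s) :
    (∏ u ∈ Ico t n, 2 * (u + 1)) * (2 * n + 1)‼ ≤ matchingCount (descendingGraph n) s := by
  have ⟨hup, hparent, hcard⟩ := hs
  rcases htn.lt_or_eq with ht | rfl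
  · -- the parent face of `t` can be matched with any unmatched face of `0, …, t - 1`
    set X := s.filter fun f => (f.1 : ℕ) < t
    have hXcard : #X = 2 * (t + 1) := by
      have hsplit : #X + #(s.filter fun f => ¬(f.1 : ℕ) < t) = #s :=
        card_filter_add_card_filter_not _
      have hupper : (s.filter fun f => ¬(f.1 : ℕ) < t) =
          univ.filter fun f : Fin n × Fin 4 => t ≤ (f.1 : ℕ) := by
        ext f; simpa using hup f
      rw [hupper, card_filter_le_fst ht] at hsplit
      omega
    have hXadj : ∀ x ∈ X, x ∈ s ∧ (descendingGraph n).Adj (⟨t, ht⟩, 0) x := by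
      intro x hx
      obtain ⟨hxs, hxt⟩ := mem_filter.1 hx
      refine ⟨hxs, fun h => ?_, fun _ => hxt, fun hpx => ?_⟩
      · rw [← h] at hxt; exact lt_irrefl _ hxt
      · exact absurd (hparent x hxs hpx) (not_le.2 hxt)
    rw [prod_eq_prod_Ico_succ_bot ht, mul_assoc, ← hXcard]
    exact card_mul_le_matchingCount (hup _ le_rfl) hXadj fun x hx =>
      prod_mul_doubleFactorial_le_matchingCount ht
        (hs.succ ht (mem_filter.1 hx).1 (mem_filter.1 hx).2)
  · -- no parent faces are left, so all remaining faces may be matched freely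
    rw [Ico_self, prod_empty, one_mul]
    refine doubleFactorial_le_matchingCount (fun f hf g hg hfg => ?_) (k := t + 1) (by omega)
    have hnp (f) (hf : f ∈ s) : ¬IsParentFace f := fun hpf => (hparent f hf hpf).not_gt f.1.2
    exact ⟨hfg, fun h => absurd h (hnp f hf), fun h => absurd h (hnp g hg)⟩
termination_by n - t

lemma factorial_le_two_mul_matchingCount (hn : 0 < n) :
    (2 * n + 1)! ≤ 2 * matchingCount (descendingGraph n) univ := by
  have hlevel : IsLevel 1 (univ : Finset (Fin n × Fin 4)) :=
    ⟨fun f _ => mem_univ f, fun _ _ hpf => hpf.2, by simp [card_univ]; omega⟩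
  have hbound := prod_mul_doubleFactorial_le_matchingCount hn hlevel
  calc (2 * n + 1)! = 2 * ((∏ u ∈ Ico 1 n, 2 * (u + 1)) * (2 * n + 1)‼) := by
        rw [Nat.factorial_eq_mul_doubleFactorial, Nat.doubleFactorial_eq_prod_even,
          prod_range_eq_mul_Ico _ hn]
        ring
    _ ≤ 2 * matchingCount (descendingGraph n) univ := Nat.mul_le_mul_left 2 hbound

section Rotations

variable (σ : Perm (Fin n × Fin 4))

abbrev PairRep : Type := {f : Fin n × Fin 4 // toLex f < toLex (σ f)}

abbrev RotationChoice : Type := ∀ f : PairRep σ, {p : Perm (Fin 4) // p f.1.2 = (σ f.1).2}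

variable {σ}

lemma lt_apply_iff_not_apply_lt (hfp : ∀ f, σ f ≠ f) (hinv : Involutive σ)
    (f : Fin n × Fin 4) : toLex f < toLex (σ f) ↔ ¬toLex (σ f) < toLex (σ (σ f)) := by
  rw [hinv f, not_lt, lt_iff_le_and_ne, Ne, toLex.injective.eq_iff, eq_comm]
  exact and_iff_left (hfp f)

lemma card_pairRep (hfp : ∀ f, σ f ≠ f) (hinv : Involutive σ) :
    Fintype.card (PairRep σ) = 2 * n := by
  have hcompl : Fintype.card {f : Fin n × Fin 4 // toLex f < toLex (σ f)} =
      Fintype.card {f : Fin n × Fin 4 // ¬toLex f < toLex (σ f)} :=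
    Fintype.card_congr (σ.subtypeEquiv (lt_apply_iff_not_apply_lt hfp hinv))
  rw [Fintype.card_subtype_compl, Fintype.card_prod, Fintype.card_fin, Fintype.card_fin]
    at hcompl
  simp only [Fintype.card_eq_nat_card] at hcompl ⊢
  unfold PairRep
  omega

lemma card_rotationChoice (hfp : ∀ f, σ f ≠ f) (hinv : Involutive σ) :
    Nat.card (RotationChoice σ) = 6 ^ (2 * n) := by
  simp_rw [Nat.card_pi, Nat.card_eq_fintype_card, card_perm_apply_eq, Fintype.card_fin]
  rw [prod_const, card_univ, card_pairRep hfp hinv]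
  rfl

def ofGluing (hfp : ∀ f, σ f ≠ f) (hinv : Involutive σ) (r : RotationChoice σ) :
    CombinatorialTriangulation n where
  glue := σ
  glue_involutive := hinv
  glue_fixedPointFree := hfp
  rot f := if h : toLex f < toLex (σ f) then r ⟨f, h⟩
    else (r ⟨σ f, not_not.1 (mt (lt_apply_iff_not_apply_lt hfp hinv f).2 h)⟩).1⁻¹
  rot_opp f := by
    split_ifs with h
    · exact (r _).2
    · rw [Perm.inv_eq_iff_eq, (r _).2, hinv f]
  rot_inverse f := by
    by_cases h : toLex f < toLex (σ f)
    · have h' := (lt_apply_iff_not_apply_lt hfp hinv f).1 h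
      rw [dif_neg h', dif_pos h]
      have hrep : ∀ g (hg : toLex g < toLex (σ g)), g = f → (r ⟨g, hg⟩).1 = r ⟨f, h⟩ := by
        rintro g hg rfl; rfl
      rw [hrep _ _ (hinv f)]
    · rw [dif_neg h, dif_pos, inv_inv]

lemma ofGluing_rot_of_lt (hfp : ∀ f, σ f ≠ f) (hinv : Involutive σ) (r : RotationChoice σ)
    (f : PairRep σ) : (ofGluing hfp hinv r).rot f = r f :=
  dif_pos f.2

end Rotations

lemma matchingCount_mul_le_card_isDescending :
    matchingCount (descendingGraph n) univ * 6 ^ (2 * n) ≤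
      Nat.card {T : CombinatorialTriangulation n // IsDescending T} := by
  let Matching := {σ // IsMatchingInvolutionOn (descendingGraph n) univ σ}
  have := Fintype.ofFinite Matching
  have hfp (σ : Matching) (f) : σ.1 f ≠ f := ((σ.2.1 f (mem_univ f)).2.ne).symm
  let build (d : Σ σ : Matching, RotationChoice σ.1) :
      {T : CombinatorialTriangulation n // IsDescending T} :=
    ⟨ofGluing (hfp d.1) d.1.2.2.2 d.2, fun f hf => (d.1.2.1 f (mem_univ f)).2.2.1 hf⟩
  have hbuild : Injective build := by
    rintro ⟨σ, r⟩ ⟨σ', r'⟩ h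
    have hT := congrArg Subtype.val h
    dsimp only [build] at hT
    obtain rfl : σ = σ' := Subtype.ext (congrArg glue hT)
    obtain rfl : r = r' := funext fun f => Subtype.ext <| by
      simpa only [ofGluing_rot_of_lt] using congrFun (congrArg rot hT) f.1
    rfl
  calc matchingCount (descendingGraph n) univ * 6 ^ (2 * n)
      = ∑ σ : Matching, Nat.card (RotationChoice σ.1) := by
        rw [sum_congr rfl fun σ _ => card_rotationChoice (hfp σ) σ.2.2.2, sum_const,
          card_univ, smul_eq_mul, matchingCount, Nat.card_eq_fintype_card]
    _ = Nat.card (Σ σ : Matching, RotationChoice σ.1) := Nat.card_sigma.symm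
    _ ≤ _ := Nat.card_le_card_of_injective build hbuild

-- `TriangulationIso T T'` unfolds to `∃ π ρ, IsIsoVia π ρ T T'`.
def IsIsoVia (π : Perm (Fin n)) (ρ : Fin n → Perm (Fin 4))
    (T T' : CombinatorialTriangulation n) : Prop :=
  (∀ f : Fin n × Fin 4,
      T'.glue (π f.1, ρ f.1 f.2) = (π (T.glue f).1, ρ (T.glue f).1 (T.glue f).2)) ∧
    ∀ f : Fin n × Fin 4, T'.rot (π f.1, ρ f.1 f.2) = ρ (T.glue f).1 * T.rot f * (ρ f.1)⁻¹

variable {π π' : Perm (Fin n)} {ρ ρ' : Fin n → Perm (Fin 4)}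
  {T T' T'' : CombinatorialTriangulation n}

lemma IsIsoVia.refl (T : CombinatorialTriangulation n) : IsIsoVia 1 (fun _ => 1) T T :=
  ⟨fun f => by simp, fun f => by simp⟩

lemma IsIsoVia.symm (h : IsIsoVia π ρ T T') :
    IsIsoVia π⁻¹ (fun t => (ρ (π⁻¹ t))⁻¹) T' T := by
  refine ⟨fun g => ?_, fun g => ?_⟩ <;> obtain ⟨f, rfl⟩ := (prodShear π ρ).surjective g <;>
    simp [h.1 f, h.2 f, mul_assoc]

lemma IsIsoVia.trans (h : IsIsoVia π ρ T T') (h' : IsIsoVia π' ρ' T' T'') :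
    IsIsoVia (π' * π) (fun t => ρ' (π t) * ρ t) T T'' := by
  refine ⟨fun f => ?_, fun f => ?_⟩
  · simpa [h.1 f] using h'.1 (π f.1, ρ f.1 f.2)
  · simpa [h.1 f, h.2 f, mul_assoc] using h'.2 (π f.1, ρ f.1 f.2)

lemma IsIsoVia.left_unique {T₁ T₂ : CombinatorialTriangulation n} (h₁ : IsIsoVia π ρ T₁ T')
    (h₂ : IsIsoVia π ρ T₂ T') : T₁ = T₂ := by
  have hglue : T₁.glue = T₂.glue :=
    Equiv.ext fun f => (prodShear π ρ).injective ((h₁.1 f).symm.trans (h₂.1 f))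
  refine ext hglue (funext fun f => ?_)
  have := (h₁.2 f).symm.trans (h₂.2 f)
  rw [hglue] at this
  exact mul_left_cancel (mul_right_cancel this)

lemma triangulationIso_equivalence :
    Equivalence (TriangulationIso : CombinatorialTriangulation n → _ → Prop) where
  refl T := ⟨1, fun _ => 1, IsIsoVia.refl T⟩
  symm := fun ⟨π, ρ, h⟩ => ⟨π⁻¹, fun t => (ρ (π⁻¹ t))⁻¹, IsIsoVia.symm h⟩
  trans := fun ⟨π, ρ, h⟩ ⟨π', ρ', h'⟩ =>
    ⟨π' * π, fun t => ρ' (π t) * ρ t, IsIsoVia.trans h h'⟩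

-- A triangulation is determined by an isomorphism to a fixed one.
lemma card_triangulationIso_le (T' : CombinatorialTriangulation n) :
    Nat.card {T // TriangulationIso T T'} ≤ n ! * 24 ^ n := by
  choose π ρ h using fun T : {T // TriangulationIso T T'} => T.2
  calc Nat.card {T // TriangulationIso T T'}
      ≤ Nat.card (Perm (Fin n) × (Fin n → Perm (Fin 4))) :=
        Nat.card_le_card_of_injective (fun T => (π T, ρ T)) fun T₁ T₂ e => by
          simp only [Prod.mk.injEq] at e
          exact Subtype.ext (IsIsoVia.left_unique (h T₁) (e.1 ▸ e.2 ▸ h T₂))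
    _ = n ! * 24 ^ n := by simp [Fintype.card_perm, Nat.factorial_succ]

lemma card_isConnected_le_card_quot_mul :
    Nat.card {T : CombinatorialTriangulation n // IsConnectedTriangulation T} ≤
      Nat.card (Quot fun T T' : {T : CombinatorialTriangulation n //
          IsConnectedTriangulation T} => TriangulationIso T.1 T'.1) * (n ! * 24 ^ n) :=
  card_le_card_quot_mul (triangulationIso_equivalence.comap Subtype.val) fun T' =>
    (Nat.card_le_card_of_injective (fun T => (⟨T.1.1, T.2⟩ : {T // TriangulationIso T T'.1}))
      fun a b h => by
        simp only [Subtype.mk.injEq] at h; exact Subtype.ext (Subtype.ext h)).trans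
    (card_triangulationIso_le T'.1)

end CombinatorialTriangulation

open CombinatorialTriangulation

/-- For every `n ≥ 1`, the number of isomorphism classes of connected combinatorial
triangulations of size `n` is at least `(2n+1)! · 6^(2n) / (2 · n! · 24^n)`. -/
theorem count_iso_classes_connected_triangulations_lower_bound (n : ℕ) (hn : 1 ≤ n) :
    ((Nat.factorial (2 * n + 1) : ℚ) * 6 ^ (2 * n)) /
        (2 * Nat.factorial n * 24 ^ n) ≤
      (Nat.card (Quot (fun T T' : {T : CombinatorialTriangulation n //
          IsConnectedTriangulation T} => TriangulationIso T.1 T'.1)) : ℚ) := by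
  set classes := Nat.card (Quot fun T T' : {T : CombinatorialTriangulation n //
    IsConnectedTriangulation T} => TriangulationIso T.1 T'.1)
  have hcount : (2 * n + 1)! * 6 ^ (2 * n) ≤ classes * (2 * n ! * 24 ^ n) :=
    calc (2 * n + 1)! * 6 ^ (2 * n)
        ≤ 2 * (matchingCount (descendingGraph n) univ * 6 ^ (2 * n)) := by
          rw [← mul_assoc]
          exact Nat.mul_le_mul_right _ (factorial_le_two_mul_matchingCount hn)
      _ ≤ 2 * Nat.card {T : CombinatorialTriangulation n // IsConnectedTriangulation T} :=
          Nat.mul_le_mul_left 2 <| matchingCount_mul_le_card_isDescending.trans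
            (card_isDescending_le_card_isConnected hn)
      _ ≤ 2 * (classes * (n ! * 24 ^ n)) :=
          Nat.mul_le_mul_left 2 card_isConnected_le_card_quot_mul
      _ = classes * (2 * n ! * 24 ^ n) := by ring
  rw [div_le_iff₀ (by positivity)]
  exact_mod_cast hcount
end
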